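/- Let S be a 2×2 trace-free matrix-valued function satisfying dS + [φ,S] = φ̇. Then d(det S) = -tr(S φ̇). -/
import Mathlib


open scoped BigOperators

section

variable {R0 Ω1 Ω2 : Type*} [CommRing R0] [AddCommGroup Ω1] [AddCommGroup Ω2]
  [Module R0 Ω1] [Module R0 Ω2]

/-- Product of a matrix-valued function and a matrix-valued 1-form, `A·ω`.
(Matrix-valued forms are matrices of scalar forms.) -/
def mMulL (A : Matrix (Fin 2) (Fin 2) R0) (ω : Matrix (Fin 2) (Fin 2) Ω1) :
    Matrix (Fin 2) (Fin 2) Ω1 :=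
  fun i j => ∑ k, A i k • ω k j

/-- Product of a matrix-valued 1-form and a matrix-valued function, `ω·A`. -/
def mMulR (ω : Matrix (Fin 2) (Fin 2) Ω1) (A : Matrix (Fin 2) (Fin 2) R0) :
    Matrix (Fin 2) (Fin 2) Ω1 :=
  fun i j => ∑ k, A k j • ω i k

/-- Wedge product of two matrix-valued 1-forms, `(ω∧η)_{ij} = Σ_k ω_{ik} ∧ η_{kj}`. -/
def mWedge (w : Ω1 → Ω1 → Ω2) (ω η : Matrix (Fin 2) (Fin 2) Ω1) :
    Matrix (Fin 2) (Fin 2) Ω2 :=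
  fun i j => ∑ k, w (ω i k) (η k j)

/-- The bracket `[φ,Y] = φY - Yφ` of a matrix 1-form with a matrix function. -/
def mBrk (φ : Matrix (Fin 2) (Fin 2) Ω1)
    (Y : Matrix (Fin 2) (Fin 2) R0) : Matrix (Fin 2) (Fin 2) Ω1 :=
  mMulR φ Y - mMulL Y φ

end

/-- Let `S` be a 2×2 trace-free matrix-valued function satisfying the inhomogeneous
Killing field equation `dS + [φ,S] = φ̇`.  Then `d(det S) = -tr(S φ̇)`, where
`tr(S φ̇) = Σ_{i,k} S_{ik} φ̇_{ki}`. -/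
theorem stmt14
    {R0 Ω1 Ω2 : Type*} [CommRing R0] [AddCommGroup Ω1] [AddCommGroup Ω2]
    [Module R0 Ω1] [Module R0 Ω2]
    (d0 : R0 → Ω1)
    (hd0add : ∀ a b, d0 (a + b) = d0 a + d0 b)
    (hd0mul : ∀ a b, d0 (a * b) = a • d0 b + b • d0 a)
    (φ φdot : Matrix (Fin 2) (Fin 2) Ω1) (S : Matrix (Fin 2) (Fin 2) R0)
    (htr : Matrix.trace S = 0)
    (hS : S.map d0 + mBrk φ S = φdot) :
    d0 (Matrix.det S) = -∑ i, ∑ k, S i k • φdot k i := by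
  have hzero : d0 0 = 0 := by have := hd0add 0 0; simpa using this
  have hneg : ∀ a, d0 (-a) = -d0 a := fun a => by
    have h := hd0add a (-a)
    rw [add_neg_cancel, hzero] at h
    exact (neg_eq_of_add_eq_zero_right h.symm).symm
  have hd : S 1 1 = -S 0 0 := by
    rw [Matrix.trace_fin_two] at htr; exact eq_neg_of_add_eq_zero_right htr
  have hφ : ∀ k i, φdot k i = d0 (S k i) + ((∑ l, S l i • φ k l) - ∑ l, S k l • φ l i) := by
    intro k i
    rw [← hS]
    simp [mBrk, mMulR, mMulL, Matrix.map]
  rw [Matrix.det_fin_two]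
  have hsub : ∀ a b : R0, d0 (a - b) = d0 a - d0 b := fun a b => by
    rw [sub_eq_add_neg, hd0add, hneg, sub_eq_add_neg]
  rw [hsub, hd0mul, hd0mul]
  simp only [hφ, Fin.sum_univ_two, hd, hneg]
  module
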